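/- Let M > 0. There is a constant C > 0 depending only on M (for instance C = M/(2π)) such that for every δ > 0, every integer j ≥ 1 and every x ∈ ℝ³ with x ≠ 0 and |x₃| ≤ M(x₁² + x₂²), one has |Φ₀(x, x_j) − Φ₀(x, y_j)| ≤ C; that is, the differences Φ₀(·, x_j) − Φ₀(·, y_j) of the exterior and interior point-source kernels are uniformly bounded on the boundary surface, uniformly in j. -/

import Mathlib

noncomputable section

open Real

/-- Euclidean space `ℝ³`. -/
abbrev E3 := EuclideanSpace ℝ (Fin 3)

/-- The fundamental solution `Φ₀(x,y) = 1/(4π|x−y|)` of the Laplacian in `ℝ³`. -/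
def Phi0 (x y : E3) : ℝ := 1 / (4 * Real.pi * ‖x - y‖)

/-- The exterior source points `x_j = (0,0,δ/j)`. -/
def xj (δ : ℝ) (j : ℕ) : E3 := EuclideanSpace.single (2 : Fin 3) (δ / j)

/-- The interior source points `y_j = (0,0,−δ/j)`. -/
def yj (δ : ℝ) (j : ℕ) : E3 := EuclideanSpace.single (2 : Fin 3) (-(δ / j))

/-!
Write `p = |x − x_j|`, `q = |x − y_j|` and `s = x₁² + x₂²`, so that
`Φ₀(x,x_j) − Φ₀(x,y_j) = (q − p)/(4π p q)`. Since `y_j = −x_j`, the identity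
`(q − p)(q + p) = q² − p² = 4⟨x, x_j⟩` together with `q + p ≥ 2|x_j|` gives `|q − p| ≤ 2|x₃|`,
while both `p²` and `q²` are at least `s`, so `p q ≥ s`. Hence the difference is at most
`2|x₃| / (4π s) ≤ M/(2π)` on the set `|x₃| ≤ M s`.
-/

section InnerProductSpace

variable {F : Type*} [NormedAddCommGroup F] [InnerProductSpace ℝ F]

theorem abs_norm_add_sub_norm_sub_mul_norm_le (x v : F) :
    |‖x + v‖ - ‖x - v‖| * ‖v‖ ≤ 2 * |inner ℝ x v| := by
  have hdiff : (‖x + v‖ - ‖x - v‖) * (‖x + v‖ + ‖x - v‖) = 4 * inner ℝ x v := by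
    linear_combination norm_add_sq_real x v - norm_sub_sq_real x v
  have hsum : 2 * ‖v‖ ≤ ‖x + v‖ + ‖x - v‖ :=
    calc 2 * ‖v‖ = ‖(x + v) - (x - v)‖ := by
          rw [add_sub_sub_cancel, ← two_smul ℝ v, norm_smul, Real.norm_two]
      _ ≤ ‖x + v‖ + ‖x - v‖ := norm_sub_le _ _
  have hprod : |‖x + v‖ - ‖x - v‖| * (‖x + v‖ + ‖x - v‖) = 4 * |inner ℝ x v| := by
    rw [← abs_of_nonneg (by positivity : 0 ≤ ‖x + v‖ + ‖x - v‖), ← abs_mul, hdiff, abs_mul,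
      abs_of_pos four_pos]
  linarith [mul_le_mul_of_nonneg_left hsum (abs_nonneg (‖x + v‖ - ‖x - v‖))]

end InnerProductSpace

theorem abs_norm_add_single_sub_norm_sub_single_le {ι : Type*} [Fintype ι] [DecidableEq ι]
    (x : EuclideanSpace ℝ ι) (i : ι) {a : ℝ} (ha : a ≠ 0) :
    |‖x + EuclideanSpace.single i a‖ - ‖x - EuclideanSpace.single i a‖| ≤ 2 * |x i| := by
  have := abs_norm_add_sub_norm_sub_mul_norm_le x (EuclideanSpace.single i a)
  rw [EuclideanSpace.inner_single_right, PiLp.norm_single, Real.norm_eq_abs, conj_trivial,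
    abs_mul] at this
  exact le_of_mul_le_mul_right (by linarith) (abs_pos.mpr ha)

theorem norm_sub_single_two_sq (x : E3) (c : ℝ) :
    ‖x - EuclideanSpace.single 2 c‖ ^ 2 = x 0 ^ 2 + x 1 ^ 2 + (x 2 - c) ^ 2 := by
  simp [EuclideanSpace.norm_sq_eq, Fin.sum_univ_three]

theorem sq_add_sq_le_norm_sub_single_mul_norm_add_single (x : E3) (a : ℝ) :
    x 0 ^ 2 + x 1 ^ 2 ≤ ‖x - EuclideanSpace.single 2 a‖ * ‖x + EuclideanSpace.single 2 a‖ := by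
  set v : E3 := EuclideanSpace.single 2 a
  have hp := norm_sub_single_two_sq x a
  have hq := norm_sub_single_two_sq x (-a)
  rw [show EuclideanSpace.single (2 : Fin 3) (-a) = -v from PiLp.single_neg _ _,
    sub_neg_eq_add] at hq
  rcases le_total ‖x - v‖ ‖x + v‖ with h | h <;>
    nlinarith [norm_nonneg (x - v), norm_nonneg (x + v), sq_nonneg (x 2 - a), sq_nonneg (x 2 + a)]

theorem sq_add_sq_pos_of_ne_zero {M : ℝ} {x : E3} (hx : x ≠ 0)
    (hxM : |x 2| ≤ M * (x 0 ^ 2 + x 1 ^ 2)) : 0 < x 0 ^ 2 + x 1 ^ 2 := by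
  refine (add_nonneg (sq_nonneg _) (sq_nonneg _)).lt_of_ne fun hs => hx ?_
  have h0 : x 0 = 0 := by nlinarith [sq_nonneg (x 0), sq_nonneg (x 1)]
  have h1 : x 1 = 0 := by nlinarith [sq_nonneg (x 0), sq_nonneg (x 1)]
  have h2 : x 2 = 0 := abs_nonpos_iff.mp (by rwa [← hs, mul_zero] at hxM)
  ext i
  fin_cases i <;> simp [h0, h1, h2]

theorem yj_eq_neg_xj (δ : ℝ) (j : ℕ) : yj δ j = -xj δ j :=
  PiLp.single_neg _ _

theorem abs_Phi0_sub_Phi0_neg {x v : E3} (h : 0 < ‖x - v‖ * ‖x + v‖) :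
    |Phi0 x v - Phi0 x (-v)| = |‖x + v‖ - ‖x - v‖| / (4 * π * (‖x - v‖ * ‖x + v‖)) := by
  have hp : ‖x - v‖ ≠ 0 := left_ne_zero_of_mul h.ne'
  have hq : ‖x + v‖ ≠ 0 := right_ne_zero_of_mul h.ne'
  rw [Phi0, Phi0, sub_neg_eq_add, ← abs_of_pos (by positivity : 0 < 4 * π * (‖x - v‖ * ‖x + v‖)),
    ← abs_div]
  congr 1
  field_simp

/-- Let `M > 0`.  There is a constant `C > 0` depending only on `M` such that
for every `δ > 0`, every integer `j ≥ 1` and every `x ∈ ℝ³` with `x ≠ 0` and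
`|x₃| ≤ M(x₁² + x₂²)`, one has `|Φ₀(x, x_j) − Φ₀(x, y_j)| ≤ C`; i.e. the differences
of the exterior and interior point-source kernels are uniformly bounded on the boundary
surface, uniformly in `j`. -/
theorem point_source_difference_bounded (M : ℝ) (hM : 0 < M) :
    ∃ C > 0, ∀ δ : ℝ, 0 < δ → ∀ j : ℕ, 1 ≤ j → ∀ x : E3, x ≠ 0 →
      |x 2| ≤ M * ((x 0) ^ 2 + (x 1) ^ 2) →
      |Phi0 x (xj δ j) - Phi0 x (yj δ j)| ≤ C := by
  refine ⟨M / (2 * π), by positivity, fun δ hδ j hj x hx hxM => ?_⟩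
  have ha : 0 < δ / j := div_pos hδ (by exact_mod_cast hj)
  rw [yj_eq_neg_xj, xj]
  generalize δ / (j : ℝ) = a at ha ⊢
  have hs := sq_add_sq_pos_of_ne_zero hx hxM
  have hpq := sq_add_sq_le_norm_sub_single_mul_norm_add_single x a
  have hqp := abs_norm_add_single_sub_norm_sub_single_le x 2 ha.ne'
  have hpq_pos := hs.trans_le hpq
  rw [abs_Phi0_sub_Phi0_neg hpq_pos, div_le_div_iff₀ (by positivity) (by positivity)]
  calc _ ≤ 2 * (M * (x 0 ^ 2 + x 1 ^ 2)) * (2 * π) := by gcongr; exact hqp.trans (by gcongr)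
    _ = M * (4 * π * (x 0 ^ 2 + x 1 ^ 2)) := by ring
    _ ≤ _ := by gcongr
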